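/- arXiv:2312.16445 — 11 statements merged into one kernel-verified Lean document; each statement's English description precedes it below -/
import Mathlib

section
/- (Validity of the partition-based Lagrangian cut, Proposition 1.) Let X ⊆ ℝ^{n₁}, π ∈ ℝ^{n₁}, π₀ ≥ 0, and let K^P = {(x', y) : x' ∈ X, y ≥ 0, T̄ x' + W y ≥ h̄}. Let L ∈ ℝ satisfy π ⬝ x' + π₀ (d ⬝ y) ≥ L for every (x', y) ∈ K^P. Suppose x ∈ X and that for each s ∈ P the set F_s(x) = {y ∈ ℝ^{n₂} : y ≥ 0, T^s x + W y ≥ h^s} is nonempty with {d ⬝ y : y ∈ F_s(x)} bounded below, and let Q_s(x) = sInf {d ⬝ y : y ∈ F_s(x)}. Then for any θ : P → ℝ with θ_s ≥ Q_s(x) for all s ∈ P, setting θ^P = (Σ_{s∈P} p_s θ_s)/p_P, one has π ⬝ x + π₀ θ^P ≥ L. -/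
/-!
For each scenario choose an `ε`-optimal recourse `y_s ∈ F_s(x)`. By linearity their `p`-weighted
average `ȳ` is a feasible recourse of the aggregated system `(T̄, h̄)` at `x`, so `(x, ȳ) ∈ Kᴾ` and
`L ≤ π ⬝ x + π₀ (d ⬝ ȳ) ≤ π ⬝ x + π₀ (θᴾ + ε)`; let `ε → 0`.
-/

open Matrix Finset Filter Topology

/-- `T̄`, `h̄` and `θᴾ` are `weightedAvg P p T`, `weightedAvg P p h` and `weightedAvg P p θ`. -/
noncomputable def weightedAvg {ι M : Type*} [AddCommMonoid M] [Module ℝ M]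
    (P : Finset ι) (p : ι → ℝ) (v : ι → M) : M :=
  (∑ s ∈ P, p s)⁻¹ • ∑ s ∈ P, p s • v s

/-- `F_s(x)` is `recourseSet (T s) W (h s) x`. -/
def recourseSet {m n k : Type*} [Fintype n] [Fintype k] (T : Matrix m n ℝ) (W : Matrix m k ℝ)
    (h : m → ℝ) (x : n → ℝ) : Set (k → ℝ) :=
  {y | 0 ≤ y ∧ h ≤ T *ᵥ x + W *ᵥ y}

section weightedAvg

variable {ι M : Type*} [AddCommMonoid M] [Module ℝ M] {P : Finset ι} {p : ι → ℝ}

theorem weightedAvg_zero : weightedAvg P p (0 : ι → M) = 0 := by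
  simp [weightedAvg]

theorem weightedAvg_add (v w : ι → M) :
    weightedAvg P p (fun s => v s + w s) = weightedAvg P p v + weightedAvg P p w := by
  simp only [weightedAvg, smul_add, sum_add_distrib]

theorem weightedAvg_mono [PartialOrder M] [IsOrderedAddMonoid M] [PosSMulMono ℝ M]
    (hp : ∀ s ∈ P, 0 ≤ p s) {v w : ι → M} (hvw : ∀ s ∈ P, v s ≤ w s) :
    weightedAvg P p v ≤ weightedAvg P p w :=
  smul_le_smul_of_nonneg_left
    (sum_le_sum fun s hs => smul_le_smul_of_nonneg_left (hvw s hs) (hp s hs))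
    (inv_nonneg.2 (sum_nonneg hp))

theorem weightedAvg_eq_div (θ : ι → ℝ) :
    weightedAvg P p θ = (∑ s ∈ P, p s * θ s) / ∑ s ∈ P, p s := by
  simp only [weightedAvg, smul_eq_mul, div_eq_inv_mul]

variable (P p) in
theorem continuous_weightedAvg_add_const (θ : ι → ℝ) :
    Continuous fun ε : ℝ => weightedAvg P p (fun s => θ s + ε) := by
  unfold weightedAvg
  fun_prop

end weightedAvg

section recourse

variable {ι m n k : Type*} [Fintype n] [Fintype k] {P : Finset ι} {p : ι → ℝ}
  {T : ι → Matrix m n ℝ} {W : Matrix m k ℝ} {h : ι → m → ℝ} {x : n → ℝ}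

theorem weightedAvg_mulVec (v : n → ℝ) :
    weightedAvg P p T *ᵥ v = weightedAvg P p (fun s => T s *ᵥ v) := by
  simp only [weightedAvg, smul_mulVec, sum_mulVec]

theorem mulVec_weightedAvg (v : ι → k → ℝ) :
    W *ᵥ weightedAvg P p v = weightedAvg P p (fun s => W *ᵥ v s) := by
  simp only [weightedAvg, mulVec_smul, mulVec_sum]

theorem dotProduct_weightedAvg (d : k → ℝ) (v : ι → k → ℝ) :
    d ⬝ᵥ weightedAvg P p v = weightedAvg P p (fun s => d ⬝ᵥ v s) := by
  simp only [weightedAvg, dotProduct_smul, dotProduct_sum]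

theorem weightedAvg_mem_recourseSet (hp : ∀ s ∈ P, 0 ≤ p s) {y : ι → k → ℝ}
    (hy : ∀ s ∈ P, y s ∈ recourseSet (T s) W (h s) x) :
    weightedAvg P p y ∈ recourseSet (weightedAvg P p T) W (weightedAvg P p h) x := by
  refine ⟨?_, ?_⟩
  · simpa only [weightedAvg_zero] using weightedAvg_mono hp (v := 0) fun s hs => (hy s hs).1
  · calc weightedAvg P p h
        ≤ weightedAvg P p (fun s => T s *ᵥ x + W *ᵥ y s) :=
          weightedAvg_mono hp fun s hs => (hy s hs).2
      _ = weightedAvg P p T *ᵥ x + W *ᵥ weightedAvg P p y := by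
        rw [weightedAvg_add, weightedAvg_mulVec, mulVec_weightedAvg]

theorem le_dotProduct_add_mul_weightedAvg_of_sInf_lt {X : Set (n → ℝ)} {π : n → ℝ} {π₀ L : ℝ}
    {d : k → ℝ} (hp : ∀ s ∈ P, 0 ≤ p s) (hπ₀ : 0 ≤ π₀)
    (hL : ∀ x' ∈ X, ∀ y ∈ recourseSet (weightedAvg P p T) W (weightedAvg P p h) x',
      L ≤ π ⬝ᵥ x' + π₀ * (d ⬝ᵥ y))
    (hx : x ∈ X) (hne : ∀ s ∈ P, (recourseSet (T s) W (h s) x).Nonempty) {t : ι → ℝ}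
    (ht : ∀ s ∈ P, sInf ((d ⬝ᵥ ·) '' recourseSet (T s) W (h s) x) < t s) :
    L ≤ π ⬝ᵥ x + π₀ * weightedAvg P p t := by
  have hy : ∀ s ∈ P, ∃ y ∈ recourseSet (T s) W (h s) x, d ⬝ᵥ y < t s := fun s hs => by
    simpa using exists_lt_of_csInf_lt ((hne s hs).image _) (ht s hs)
  choose! y hyF hyt using hy
  calc L ≤ π ⬝ᵥ x + π₀ * (d ⬝ᵥ weightedAvg P p y) :=
        hL x hx _ (weightedAvg_mem_recourseSet hp hyF)
    _ = π ⬝ᵥ x + π₀ * weightedAvg P p (fun s => d ⬝ᵥ y s) := by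
        rw [dotProduct_weightedAvg]
    _ ≤ π ⬝ᵥ x + π₀ * weightedAvg P p t := by
        gcongr
        exact weightedAvg_mono hp fun s hs => (hyt s hs).le

end recourse

theorem partition_lagrangian_cut_valid_general {n₁ n₂ m : ℕ} {ι : Type*} (P : Finset ι)
    (p : ι → ℝ) (hp : ∀ s ∈ P, 0 < p s)
    (W : Matrix (Fin m) (Fin n₂) ℝ) (d : Fin n₂ → ℝ)
    (T : ι → Matrix (Fin m) (Fin n₁) ℝ) (h : ι → Fin m → ℝ)
    (X : Set (Fin n₁ → ℝ)) (π : Fin n₁ → ℝ) (π₀ : ℝ) (hπ₀ : 0 ≤ π₀) (L : ℝ)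
    (hL : ∀ x' : Fin n₁ → ℝ, ∀ y : Fin n₂ → ℝ, x' ∈ X → 0 ≤ y →
      ((∑ s ∈ P, p s)⁻¹ • ∑ s ∈ P, p s • h s) ≤
        ((∑ s ∈ P, p s)⁻¹ • ∑ s ∈ P, p s • T s) *ᵥ x' + W *ᵥ y →
      L ≤ π ⬝ᵥ x' + π₀ * (d ⬝ᵥ y))
    (x : Fin n₁ → ℝ) (hx : x ∈ X)
    (hne : ∀ s ∈ P, {y : Fin n₂ → ℝ | 0 ≤ y ∧ h s ≤ T s *ᵥ x + W *ᵥ y}.Nonempty)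
    (θ : ι → ℝ)
    (hθ : ∀ s ∈ P,
      sInf ((fun y => d ⬝ᵥ y) '' {y : Fin n₂ → ℝ | 0 ≤ y ∧ h s ≤ T s *ᵥ x + W *ᵥ y}) ≤ θ s) :
    L ≤ π ⬝ᵥ x + π₀ * ((∑ s ∈ P, p s * θ s) / (∑ s ∈ P, p s)) := by
  have hcut : ∀ ε > 0, L ≤ π ⬝ᵥ x + π₀ * weightedAvg P p (fun s => θ s + ε) := fun ε hε =>
    le_dotProduct_add_mul_weightedAvg_of_sInf_lt (fun s hs => (hp s hs).le) hπ₀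
      (fun x' hx' y hy => hL x' y hx' hy.1 hy.2) hx hne
      (fun s hs => (hθ s hs).trans_lt (lt_add_of_pos_right _ hε))
  have hlim : Tendsto (fun ε => π ⬝ᵥ x + π₀ * weightedAvg P p (fun s => θ s + ε)) (𝓝[>] 0)
      (𝓝 (π ⬝ᵥ x + π₀ * weightedAvg P p θ)) := by
    simpa using ((continuous_weightedAvg_add_const P p θ).tendsto 0).const_mul π₀
      |>.const_add (π ⬝ᵥ x) |>.mono_left nhdsWithin_le_nhds
  rw [← weightedAvg_eq_div]
  exact ge_of_tendsto hlim (eventually_nhdsWithin_of_forall hcut)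

/-- Proposition 1: validity of the partition-based Lagrangian cut. -/
theorem partition_lagrangian_cut_valid {n₁ n₂ m : ℕ} {ι : Type*} (P : Finset ι)
    (hP : P.Nonempty) (p : ι → ℝ) (hp : ∀ s ∈ P, 0 < p s)
    (W : Matrix (Fin m) (Fin n₂) ℝ) (d : Fin n₂ → ℝ)
    (T : ι → Matrix (Fin m) (Fin n₁) ℝ) (h : ι → Fin m → ℝ)
    (X : Set (Fin n₁ → ℝ)) (π : Fin n₁ → ℝ) (π₀ : ℝ) (hπ₀ : 0 ≤ π₀) (L : ℝ)
    (hL : ∀ x' : Fin n₁ → ℝ, ∀ y : Fin n₂ → ℝ, x' ∈ X → 0 ≤ y →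
      ((∑ s ∈ P, p s)⁻¹ • ∑ s ∈ P, p s • h s) ≤
        ((∑ s ∈ P, p s)⁻¹ • ∑ s ∈ P, p s • T s) *ᵥ x' + W *ᵥ y →
      L ≤ π ⬝ᵥ x' + π₀ * (d ⬝ᵥ y))
    (x : Fin n₁ → ℝ) (hx : x ∈ X)
    (hne : ∀ s ∈ P, {y : Fin n₂ → ℝ | 0 ≤ y ∧ h s ≤ T s *ᵥ x + W *ᵥ y}.Nonempty)
    (hbdd : ∀ s ∈ P,
      BddBelow ((fun y => d ⬝ᵥ y) '' {y : Fin n₂ → ℝ | 0 ≤ y ∧ h s ≤ T s *ᵥ x + W *ᵥ y}))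
    (θ : ι → ℝ)
    (hθ : ∀ s ∈ P,
      sInf ((fun y => d ⬝ᵥ y) '' {y : Fin n₂ → ℝ | 0 ≤ y ∧ h s ≤ T s *ᵥ x + W *ᵥ y}) ≤ θ s) :
    L ≤ π ⬝ᵥ x + π₀ * ((∑ s ∈ P, p s * θ s) / (∑ s ∈ P, p s)) :=
  partition_lagrangian_cut_valid_general P p hp W d T h X π π₀ hπ₀ L hL x hx hne θ hθ
end

section
/- (Validity of the partition-based Benders cut, first part of Proposition 2.) Let λ ∈ ℝ^m with λ ≥ 0 componentwise and Wᵀ λ ≤ d componentwise (λ is dual feasible). Let x ∈ ℝ^{n₁}, and suppose that for each s ∈ P the set F_s(x) = {y ∈ ℝ^{n₂} : y ≥ 0, T^s x + W y ≥ h^s} is nonempty; let Q_s(x) = sInf {d ⬝ y : y ∈ F_s(x)}. Then for any θ : P → ℝ with θ_s ≥ Q_s(x) for all s ∈ P, setting θ^P = (Σ_{s∈P} p_s θ_s)/p_P, one has θ^P ≥ λ ⬝ (h̄ − T̄ x). -/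
open Matrix Finset

lemma dot_mono_left {m : ℕ} (lam a b : Fin m → ℝ) (h0 : 0 ≤ lam) (hab : a ≤ b) :
    lam ⬝ᵥ a ≤ lam ⬝ᵥ b := by
  apply Finset.sum_le_sum
  intro i _
  exact mul_le_mul_of_nonneg_left (hab i) (h0 i)

lemma dot_mono_right {m : ℕ} (lam a b : Fin m → ℝ) (h0 : 0 ≤ lam) (hab : a ≤ b) :
    a ⬝ᵥ lam ≤ b ⬝ᵥ lam := by
  apply Finset.sum_le_sum
  intro i _
  exact mul_le_mul_of_nonneg_right (hab i) (h0 i)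

lemma dot_sum {m : ℕ} {ι : Type*} (P : Finset ι) (lam : Fin m → ℝ) (f : ι → Fin m → ℝ) :
    lam ⬝ᵥ ∑ s ∈ P, f s = ∑ s ∈ P, lam ⬝ᵥ f s := by
  simp only [dotProduct, Finset.sum_apply, Finset.mul_sum]
  rw [Finset.sum_comm]

/-- Proposition 2, first part: validity of the partition-based Benders cut. -/
theorem partition_benders_cut_valid {n₁ n₂ m : ℕ} {ι : Type*} (P : Finset ι)
    (hP : P.Nonempty) (p : ι → ℝ) (hp : ∀ s ∈ P, 0 < p s)
    (W : Matrix (Fin m) (Fin n₂) ℝ) (d : Fin n₂ → ℝ)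
    (T : ι → Matrix (Fin m) (Fin n₁) ℝ) (h : ι → Fin m → ℝ)
    (lam : Fin m → ℝ) (hlam0 : 0 ≤ lam) (hlamW : Wᵀ *ᵥ lam ≤ d)
    (x : Fin n₁ → ℝ)
    (hne : ∀ s ∈ P, {y : Fin n₂ → ℝ | 0 ≤ y ∧ h s ≤ T s *ᵥ x + W *ᵥ y}.Nonempty)
    (θ : ι → ℝ)
    (hθ : ∀ s ∈ P,
      sInf ((fun y => d ⬝ᵥ y) '' {y : Fin n₂ → ℝ | 0 ≤ y ∧ h s ≤ T s *ᵥ x + W *ᵥ y}) ≤ θ s) :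
    lam ⬝ᵥ (((∑ s ∈ P, p s)⁻¹ • ∑ s ∈ P, p s • h s) -
        ((∑ s ∈ P, p s)⁻¹ • ∑ s ∈ P, p s • T s) *ᵥ x) ≤
      (∑ s ∈ P, p s * θ s) / (∑ s ∈ P, p s) := by
  have hS : 0 < ∑ s ∈ P, p s := Finset.sum_pos hp hP
  -- key per-scenario bound
  have key : ∀ s ∈ P, lam ⬝ᵥ (h s - T s *ᵥ x) ≤ θ s := by
    intro s hs
    refine le_trans ?_ (hθ s hs)
    refine le_csInf ((hne s hs).image _) ?_
    rintro b ⟨y, ⟨hy0, hyf⟩, rfl⟩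
    have h1 : lam ⬝ᵥ h s ≤ lam ⬝ᵥ (T s *ᵥ x + W *ᵥ y) :=
      dot_mono_left lam _ _ hlam0 hyf
    have h2 : lam ⬝ᵥ (W *ᵥ y) = (Wᵀ *ᵥ lam) ⬝ᵥ y := by
      rw [Matrix.dotProduct_mulVec, Matrix.mulVec_transpose]
    have h3 : (Wᵀ *ᵥ lam) ⬝ᵥ y ≤ d ⬝ᵥ y := dot_mono_right y _ _ hy0 hlamW
    have : lam ⬝ᵥ (h s - T s *ᵥ x) = lam ⬝ᵥ h s - lam ⬝ᵥ (T s *ᵥ x) := by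
      simp [dotProduct_sub]
    rw [this]
    have := h1
    rw [dotProduct_add] at this
    linarith [h2 ▸ h3]
  -- rewrite LHS
  have hrw : lam ⬝ᵥ (((∑ s ∈ P, p s)⁻¹ • ∑ s ∈ P, p s • h s) -
      ((∑ s ∈ P, p s)⁻¹ • ∑ s ∈ P, p s • T s) *ᵥ x)
      = (∑ s ∈ P, p s)⁻¹ * ∑ s ∈ P, p s * (lam ⬝ᵥ (h s - T s *ᵥ x)) := by
    rw [Matrix.smul_mulVec, ← smul_sub, dotProduct_smul, smul_eq_mul]
    congr 1
    have hsum : (∑ s ∈ P, p s • T s) *ᵥ x = ∑ s ∈ P, (p s • T s) *ᵥ x := by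
      ext i
      simp only [Matrix.mulVec, dotProduct, Finset.sum_apply, Matrix.sum_apply,
        Finset.sum_mul, Pi.smul_apply, Matrix.smul_apply, smul_eq_mul]
      rw [Finset.sum_comm]
    rw [hsum, ← Finset.sum_sub_distrib, dot_sum]
    refine Finset.sum_congr rfl fun s _ => ?_
    rw [Matrix.smul_mulVec, ← smul_sub, dotProduct_smul, smul_eq_mul]
  rw [hrw, div_eq_inv_mul]
  apply mul_le_mul_of_nonneg_left _ (inv_nonneg.mpr hS.le)
  apply Finset.sum_le_sum
  intro s hs
  exact mul_le_mul_of_nonneg_left (key s hs) (hp s hs).le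
end

section
/- (One-dimensional extension of Jensen's inequality, Lemma 3 in the form used.) Let g : ℝ → ℝ be convex on ℝ. Let J be a finite set, ν : J → ℝ with ν_j ≥ 0 for all j and Σ_{j∈J} ν_j = 1, and y : J → ℤ. Set x = Σ_{j∈J} ν_j (y_j : ℝ) and m = ⌊x⌋. Then g(x) ≤ ((m+1) − x) · g(m) + (x − m) · g(m+1) ≤ Σ_{j∈J} ν_j g(y_j). That is, among all representations of x as a convex combination of integers, the combination using the two adjacent integers ⌊x⌋ and ⌊x⌋+1 gives the smallest value of the corresponding convex combination of g-values. -/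
open Finset

/-!
Integers never lie strictly between `m = ⌊x⌋` and `m + 1`, and outside `(m, m + 1)` a convex
function lies above its chord over `[m, m + 1]`. Averaging the chord, which is affine, over the
`y j` with weights `ν j` gives its value at `x`; inside `[m, m + 1]` the chord lies above `g`.
-/

section Chord

variable {𝕜 : Type*} [Field 𝕜] [LinearOrder 𝕜] [IsStrictOrderedRing 𝕜] {s : Set 𝕜}
  {f : 𝕜 → 𝕜} {a b t : 𝕜}

theorem ConvexOn.le_chord_of_mem_Icc (hf : ConvexOn 𝕜 s f) (ha : a ∈ s) (hb : b ∈ s)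
    (ht : t ∈ Set.Icc a b) : (b - a) * f t ≤ (b - t) * f a + (t - a) * f b := by
  obtain ⟨hat, htb⟩ := ht
  rcases hat.eq_or_lt with rfl | hat
  · linarith
  rcases htb.eq_or_lt with rfl | htb
  · linarith
  exact hf.secant_mono_aux1 ha hb hat htb

theorem ConvexOn.chord_le_of_notMem_Ioo (hf : ConvexOn 𝕜 s f) (ha : a ∈ s) (hb : b ∈ s)
    (ht : t ∈ s) (hab : a ≤ b) (hta : t ∉ Set.Ioo a b) :
    (b - t) * f a + (t - a) * f b ≤ (b - a) * f t := by
  rcases hab.eq_or_lt with rfl | hab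
  · linarith
  rcases le_or_gt t a with hta' | hat
  · rcases hta'.eq_or_lt with rfl | hta'
    · linarith
    linarith [hf.secant_mono_aux1 ht hb hta' hab]
  · have hbt : b ≤ t := not_lt.1 fun htb => hta ⟨hat, htb⟩
    rcases hbt.eq_or_lt with rfl | hbt
    · linarith
    linarith [hf.secant_mono_aux1 ha ht hab hbt]

end Chord

theorem ConvexOn.unit_chord_le_of_int {f : ℝ → ℝ} (hf : ConvexOn ℝ Set.univ f) (m n : ℤ) :
    ((m + 1 : ℝ) - n) * f m + (n - m) * f (m + 1) ≤ f n := by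
  have hn : (n : ℝ) ∉ Set.Ioo (m : ℝ) (m + 1) := fun ⟨hmn, hnm⟩ => by
    norm_cast at hmn hnm
    omega
  simpa using hf.chord_le_of_notMem_Ioo (Set.mem_univ _) (Set.mem_univ _) (Set.mem_univ _)
    (by linarith) hn

theorem Finset.sum_mul_chord {ι 𝕜 : Type*} [CommRing 𝕜] (J : Finset ι) (w t : ι → 𝕜)
    (hw : ∑ j ∈ J, w j = 1) (a b A B : 𝕜) :
    ∑ j ∈ J, w j * ((b - t j) * A + (t j - a) * B) =
      (b - ∑ j ∈ J, w j * t j) * A + (∑ j ∈ J, w j * t j - a) * B := by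
  have hterm : ∀ j ∈ J, w j * ((b - t j) * A + (t j - a) * B) =
      (b * A - a * B) * w j + (B - A) * (w j * t j) := fun j _ => by ring
  rw [sum_congr rfl hterm, sum_add_distrib, ← mul_sum, ← mul_sum, hw]
  ring

/-- Lemma 3: one-dimensional extension of Jensen's inequality. Among all
representations of `x` as a convex combination of integers, the combination using the
adjacent integers `⌊x⌋` and `⌊x⌋ + 1` minimizes the corresponding combination of values. -/
theorem jensen_extension_one_dim {ι : Type*} (g : ℝ → ℝ) (hg : ConvexOn ℝ Set.univ g)
    (J : Finset ι) (ν : ι → ℝ) (hν0 : ∀ j ∈ J, 0 ≤ ν j) (hν1 : ∑ j ∈ J, ν j = 1)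
    (y : ι → ℤ) (x : ℝ) (hx : x = ∑ j ∈ J, ν j * (y j : ℝ)) (m : ℤ) (hm : m = ⌊x⌋) :
    g x ≤ ((m + 1 : ℝ) - x) * g (m : ℝ) + (x - (m : ℝ)) * g ((m : ℝ) + 1) ∧
    ((m + 1 : ℝ) - x) * g (m : ℝ) + (x - (m : ℝ)) * g ((m : ℝ) + 1) ≤
      ∑ j ∈ J, ν j * g (y j : ℝ) := by
  have hmx : (m : ℝ) ≤ x := hm ▸ Int.floor_le x
  have hxm : x ≤ m + 1 := (hm ▸ Int.lt_floor_add_one x).le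
  constructor
  · simpa using hg.le_chord_of_mem_Icc (Set.mem_univ (m : ℝ)) (Set.mem_univ ((m : ℝ) + 1))
      ⟨hmx, hxm⟩
  · calc ((m + 1 : ℝ) - x) * g m + (x - m) * g (m + 1)
        = ∑ j ∈ J, ν j * (((m : ℝ) + 1 - y j) * g m + (y j - m) * g (m + 1)) := by
          rw [sum_mul_chord J ν (fun j => (y j : ℝ)) hν1, hx]
      _ ≤ ∑ j ∈ J, ν j * g (y j) := sum_le_sum fun j hj =>
          mul_le_mul_of_nonneg_left (hg.unit_chord_le_of_int m (y j)) (hν0 j hj)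
end

section
/- (Key claim in the proof of Proposition 3: convex hull of an integer epigraph.) Let g : ℝ → ℝ be convex on ℝ and let E = {(t, θ) ∈ ℝ × ℝ : t is the cast of an integer and θ ≥ g(t)}. Then for every (x, θ) in the convex hull of E (over ℝ), writing m = ⌊x⌋, one has θ ≥ ((m+1) − x) · g(m) + (x − m) · g(m+1). -/
lemma chord_le_of_convex (g : ℝ → ℝ) (hg : ConvexOn ℝ Set.univ g) (k : ℤ) (t : ℝ)
    (ht : t ≤ (k : ℝ) ∨ (k : ℝ) + 1 ≤ t) :
    ((k : ℝ) + 1 - t) * g (k : ℝ) + (t - (k : ℝ)) * g ((k : ℝ) + 1) ≤ g t := by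
  rcases ht with h | h
  · rcases eq_or_lt_of_le h with rfl | h
    · ring_nf
      linarith [le_refl (g ((k:ℝ)))]
    · -- a = k+1, x = t, y = k
      have hs := hg.secant_mono (a := (k:ℝ)+1) (x := t) (y := (k:ℝ))
        (Set.mem_univ _) (Set.mem_univ _) (Set.mem_univ _)
        (by linarith) (by linarith) (by linarith)
      have h1 : t - ((k:ℝ)+1) < 0 := by linarith
      have h2 : (g t - g ((k:ℝ)+1)) / (t - ((k:ℝ)+1)) ≤ (g (k:ℝ) - g ((k:ℝ)+1)) / ((k:ℝ) - ((k:ℝ)+1)) := hs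
      have h3 : ((k:ℝ) - ((k:ℝ)+1)) = -1 := by ring
      rw [h3] at h2
      rw [div_le_iff_of_neg h1] at h2
      nlinarith [h2]
  · rcases eq_or_lt_of_le h with rfl | h
    · ring_nf
      linarith [le_refl (g (1+(k:ℝ)))]
    · -- a = k, x = k+1, y = t
      have hs := hg.secant_mono (a := (k:ℝ)) (x := (k:ℝ)+1) (y := t)
        (Set.mem_univ _) (Set.mem_univ _) (Set.mem_univ _)
        (by linarith) (by linarith) (by linarith)
      have h1 : (0:ℝ) < t - (k:ℝ) := by linarith
      have h2 : (g ((k:ℝ)+1) - g (k:ℝ)) / (((k:ℝ)+1) - (k:ℝ)) ≤ (g t - g (k:ℝ)) / (t - (k:ℝ)) := hs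
      have h3 : (((k:ℝ)+1) - (k:ℝ)) = 1 := by ring
      rw [h3, div_one, le_div_iff₀ h1] at h2
      nlinarith [h2]

/-- every point of the convex hull of the integer epigraph of a convex
function lies above the chord through the adjacent integers `⌊x⌋` and `⌊x⌋ + 1`. -/
theorem convexHull_integer_epigraph_bound (g : ℝ → ℝ) (hg : ConvexOn ℝ Set.univ g)
    (E : Set (ℝ × ℝ)) (hE : E = {q : ℝ × ℝ | (∃ k : ℤ, q.1 = (k : ℝ)) ∧ g q.1 ≤ q.2})
    (x θ : ℝ) (hmem : (x, θ) ∈ convexHull ℝ E) (m : ℤ) (hm : m = ⌊x⌋) :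
    ((m + 1 : ℝ) - x) * g (m : ℝ) + (x - (m : ℝ)) * g ((m : ℝ) + 1) ≤ θ := by
  set S : Set (ℝ × ℝ) :=
    {q : ℝ × ℝ | ∀ k : ℤ, ((k : ℝ) + 1 - q.1) * g (k : ℝ) + (q.1 - (k : ℝ)) * g ((k : ℝ) + 1) ≤ q.2}
    with hS
  have hconv : Convex ℝ S := by
    intro p hp q hq a b ha hb hab
    intro k
    have h1 := hp k
    have h2 := hq k
    simp only [Prod.fst_add, Prod.snd_add, Prod.smul_fst, Prod.smul_snd, smul_eq_mul]
    have e : ((k:ℝ) + 1 - (a * p.1 + b * q.1)) * g (k:ℝ) + (a * p.1 + b * q.1 - (k:ℝ)) * g ((k:ℝ) + 1)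
        = a * (((k:ℝ) + 1 - p.1) * g (k:ℝ) + (p.1 - (k:ℝ)) * g ((k:ℝ) + 1))
          + b * (((k:ℝ) + 1 - q.1) * g (k:ℝ) + (q.1 - (k:ℝ)) * g ((k:ℝ) + 1)) := by
      have hb' : b = 1 - a := by linarith
      rw [hb']; ring
    rw [e]
    have := mul_le_mul_of_nonneg_left h1 ha
    have := mul_le_mul_of_nonneg_left h2 hb
    linarith
  have hsub : E ⊆ S := by
    rintro q hq k
    rw [hE] at hq
    obtain ⟨⟨n, hn⟩, hgq⟩ := hq
    have key : ((k : ℝ) + 1 - q.1) * g (k : ℝ) + (q.1 - (k : ℝ)) * g ((k : ℝ) + 1) ≤ g q.1 := by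
      apply chord_le_of_convex g hg
      rw [hn]
      rcases le_or_gt n k with h | h
      · left; exact_mod_cast h
      · right
        have : k + 1 ≤ n := h
        calc ((k:ℝ)) + 1 = ((k + 1 : ℤ) : ℝ) := by push_cast; ring
          _ ≤ (n : ℝ) := by exact_mod_cast this
    linarith
  have hmem' : (x, θ) ∈ S := convexHull_min hsub hconv hmem
  have := hmem' m
  simpa using this
end

section
/- (Two-point representation claim in the proof of Proposition 3.) Let g : ℝ → ℝ be convex on ℝ and let E = {(t, θ) ∈ ℝ × ℝ : t is the cast of an integer and θ ≥ g(t)}. Then for every (x, θ) in the convex hull of E (over ℝ), writing m = ⌊x⌋ and μ = x − m ∈ [0,1), there exist θ₁ ≥ g(m) and θ₂ ≥ g(m+1) such that x = (1−μ)·m + μ·(m+1) and θ = (1−μ)·θ₁ + μ·θ₂; i.e., every point of the convex hull of E is a convex combination of two points of E whose first coordinates are the adjacent integers ⌊x⌋ and ⌊x⌋+1. -/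
/-- every point of the convex hull of the integer epigraph of a convex
function is a convex combination of two points of the epigraph whose first coordinates
are the adjacent integers `⌊x⌋` and `⌊x⌋ + 1`. -/
theorem convexHull_integer_epigraph_two_point (g : ℝ → ℝ) (hg : ConvexOn ℝ Set.univ g)
    (E : Set (ℝ × ℝ)) (hE : E = {q : ℝ × ℝ | (∃ k : ℤ, q.1 = (k : ℝ)) ∧ g q.1 ≤ q.2})
    (x θ : ℝ) (hmem : (x, θ) ∈ convexHull ℝ E)
    (m : ℤ) (hm : m = ⌊x⌋) (μ : ℝ) (hμ : μ = x - (m : ℝ)) :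
    ∃ θ₁ θ₂ : ℝ, g (m : ℝ) ≤ θ₁ ∧ g ((m : ℝ) + 1) ≤ θ₂ ∧
      x = (1 - μ) * (m : ℝ) + μ * ((m : ℝ) + 1) ∧ θ = (1 - μ) * θ₁ + μ * θ₂ := by
  set s : ℝ := g ((m : ℝ) + 1) - g (m : ℝ) with hs
  -- key: every integer point of the graph lies above the line through (m, g m), (m+1, g (m+1))
  have key : ∀ k : ℤ, g (m : ℝ) + ((k : ℝ) - (m : ℝ)) * s ≤ g (k : ℝ) := by
    intro k
    rcases lt_trichotomy k m with hk | hk | hk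
    · have hk' : (k : ℝ) < (m : ℝ) := by exact_mod_cast hk
      have h2 : (m : ℝ) < (m : ℝ) + 1 := by linarith
      have := hg.slope_mono_adjacent (Set.mem_univ (k : ℝ)) (Set.mem_univ ((m : ℝ) + 1)) hk' h2
      have hden : (0:ℝ) < (m : ℝ) - (k : ℝ) := by linarith
      rw [div_le_div_iff₀ hden (by linarith : (0:ℝ) < (m : ℝ) + 1 - (m : ℝ))] at this
      nlinarith
    · subst hk; simp
    · rcases eq_or_lt_of_le (Int.add_one_le_iff.mpr hk) with hk1 | hk1
      · have : (k : ℝ) = (m : ℝ) + 1 := by exact_mod_cast hk1.symm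
        rw [this]; simp [hs]
      · have hk' : (m : ℝ) + 1 < (k : ℝ) := by exact_mod_cast hk1
        have h2 : (m : ℝ) < (m : ℝ) + 1 := by linarith
        have := hg.slope_mono_adjacent (Set.mem_univ (m : ℝ)) (Set.mem_univ (k : ℝ)) h2 hk'
        have hden : (0:ℝ) < (k : ℝ) - ((m : ℝ) + 1) := by linarith
        rw [div_le_div_iff₀ (by linarith : (0:ℝ) < (m : ℝ) + 1 - (m : ℝ)) hden] at this
        nlinarith
  -- the half-plane above this line is convex and contains E
  set C : Set (ℝ × ℝ) := {q | g (m : ℝ) + (q.1 - (m : ℝ)) * s ≤ q.2} with hC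
  have hCconv : Convex ℝ C := by
    intro p hp q hq a b ha hb hab
    simp only [hC, Set.mem_setOf_eq] at hp hq ⊢
    have : a * (g (m : ℝ) + (p.1 - (m : ℝ)) * s) + b * (g (m : ℝ) + (q.1 - (m : ℝ)) * s)
        ≤ a * p.2 + b * q.2 := by
      exact add_le_add (mul_le_mul_of_nonneg_left hp ha) (mul_le_mul_of_nonneg_left hq hb)
    have heq : a * (g (m : ℝ) + (p.1 - (m : ℝ)) * s) + b * (g (m : ℝ) + (q.1 - (m : ℝ)) * s)
        = g (m : ℝ) + ((a * p.1 + b * q.1) - (m : ℝ)) * s := by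
      have : b = 1 - a := by linarith
      subst this; ring
    rw [heq] at this
    simpa using this
  have hEC : E ⊆ C := by
    rintro ⟨t, θ'⟩ ht
    rw [hE] at ht
    obtain ⟨⟨k, hk⟩, hθ'⟩ := ht
    simp only [hC, Set.mem_setOf_eq]
    simp only at hk hθ'
    rw [hk] at hθ' ⊢
    exact le_trans (key k) hθ'
  have hxθ : g (m : ℝ) + (x - (m : ℝ)) * s ≤ θ := by
    have := convexHull_min hEC hCconv hmem
    simpa [hC] using this
  rw [← hμ] at hxθ
  -- now construct θ₁, θ₂
  have hμ0 : 0 ≤ μ := by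
    rw [hμ, hm]; exact sub_nonneg.mpr (Int.floor_le x)
  rcases eq_or_lt_of_le hμ0 with hμz | hμpos
  · refine ⟨θ, g ((m : ℝ) + 1), ?_, le_refl _, ?_, ?_⟩
    · rw [← hμz] at hxθ; simpa using hxθ
    · rw [hμ]; ring
    · rw [← hμz]; ring
  · set d : ℝ := θ - (g (m : ℝ) + μ * s) with hd
    have hd0 : 0 ≤ d := by rw [hd]; linarith
    refine ⟨g (m : ℝ) + d, g ((m : ℝ) + 1) + d, by linarith, by linarith, ?_, ?_⟩
    · rw [hμ]; ring
    · rw [hd, hs]; ring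
end

section
/- (Proposition 3(1): no Lagrangian duality gap with a one-dimensional integer first stage.) Let S be a finite set, p : S → ℝ with p_s ≥ 0 for all s, c ∈ ℝ, and for each s ∈ S let g_s : ℝ → ℝ be convex on ℝ and set E_s = {(t, θ) ∈ ℝ × ℝ : t is the cast of an integer and θ ≥ g_s(t)}. Let L ∈ ℝ satisfy c·(k : ℝ) + Σ_{s∈S} p_s g_s(k) ≥ L for every integer k. Then for every x ∈ ℝ and θ : S → ℝ such that (x, θ_s) belongs to the convex hull of E_s for every s ∈ S, one has c·x + Σ_{s∈S} p_s θ_s ≥ L. (Hence the Lagrangian dual relaxation obtained by replacing each E_s with its convex hull has the same optimal value as the integer problem.) -/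
open Finset

/-- Chord inequality: a convex function lies above the secant line through
`(a, g a)` and `(a+1, g (a+1))` outside the open interval `(a, a+1)`. -/
lemma chord_ineq {g : ℝ → ℝ} (hg : ConvexOn ℝ Set.univ g) (a k : ℝ)
    (hk : k ≤ a ∨ a + 1 ≤ k) :
    g a + (g (a + 1) - g a) * (k - a) ≤ g k := by
  rcases hk with hk | hk
  · rcases eq_or_lt_of_le hk with rfl | hk
    · simp
    · have h := hg.slope_mono_adjacent (Set.mem_univ k) (Set.mem_univ (a + 1))
        hk (by linarith)
      rw [div_le_div_iff₀ (by linarith) (by linarith)] at h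
      nlinarith
  · rcases eq_or_lt_of_le hk with rfl | hk
    · simp
    · have h := hg.slope_mono_adjacent (Set.mem_univ a) (Set.mem_univ k)
        (by linarith) hk
      rw [div_le_div_iff₀ (by linarith) (by linarith)] at h
      nlinarith

/-- Proposition 3(1): no Lagrangian duality gap with a one-dimensional
integer first stage. -/
theorem no_lagrangian_gap_one_dim {ι : Type*} (S : Finset ι) (p : ι → ℝ)
    (hp : ∀ s ∈ S, 0 ≤ p s) (c : ℝ) (g : ι → ℝ → ℝ)
    (hg : ∀ s ∈ S, ConvexOn ℝ Set.univ (g s))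
    (E : ι → Set (ℝ × ℝ))
    (hE : ∀ s, E s = {q : ℝ × ℝ | (∃ k : ℤ, q.1 = (k : ℝ)) ∧ g s q.1 ≤ q.2})
    (L : ℝ) (hL : ∀ k : ℤ, L ≤ c * (k : ℝ) + ∑ s ∈ S, p s * g s (k : ℝ)) :
    ∀ (x : ℝ) (θ : ι → ℝ), (∀ s ∈ S, (x, θ s) ∈ convexHull ℝ (E s)) →
      L ≤ c * x + ∑ s ∈ S, p s * θ s := by
  intro x θ hθ
  set n : ℤ := ⌊x⌋ with hn
  set μ : ℝ := x - (n : ℝ) with hμ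
  have hμ0 : 0 ≤ μ := by
    have := Int.floor_le x; simp [hμ]; linarith
  have hμ1 : μ ≤ 1 := by
    have := (Int.lt_floor_add_one x).le; rw [hμ]; linarith
  -- key: θ s is above the chord value at x
  have key : ∀ s ∈ S, g s (n : ℝ) + (g s ((n : ℝ) + 1) - g s (n : ℝ)) * μ ≤ θ s := by
    intro s hs
    have hconv := hg s hs
    set sl : ℝ := g s ((n : ℝ) + 1) - g s (n : ℝ) with hsl
    have hsub : convexHull ℝ (E s) ⊆
        {q : ℝ × ℝ | sl * q.1 - q.2 ≤ sl * (n : ℝ) - g s (n : ℝ)} := by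
      apply convexHull_min
      · rintro ⟨t, y⟩ hq
        rw [hE s] at hq
        obtain ⟨⟨k, rfl⟩, hy⟩ := hq
        have hk : (k : ℝ) ≤ (n : ℝ) ∨ (n : ℝ) + 1 ≤ (k : ℝ) := by
          rcases le_or_gt k n with h | h
          · left; exact_mod_cast h
          · right; exact_mod_cast h
        have := chord_ineq hconv (n : ℝ) (k : ℝ) hk
        simp only [Set.mem_setOf_eq] at hy ⊢
        rw [hsl]
        nlinarith
      · exact convex_halfSpace_le
          ⟨fun a b => by simp; ring, fun r a => by simp; ring⟩ _
    have hmem := hsub (hθ s hs)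
    simp only [Set.mem_setOf_eq] at hmem
    rw [hsl] at hmem ⊢
    have hx : x = (n : ℝ) + μ := by rw [hμ]; ring
    rw [hx] at hmem
    nlinarith [hmem]
  have hsum : (1 - μ) * ∑ s ∈ S, p s * g s (n : ℝ)
      + μ * ∑ s ∈ S, p s * g s ((n : ℝ) + 1) ≤ ∑ s ∈ S, p s * θ s := by
    rw [Finset.mul_sum, Finset.mul_sum, ← Finset.sum_add_distrib]
    apply Finset.sum_le_sum
    intro s hs
    have hk := key s hs
    have hps := hp s hs
    nlinarith [mul_le_mul_of_nonneg_left hk hps]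
  have h1 := hL n
  have h2 := hL (n + 1)
  push_cast at h2
  have h1' := mul_le_mul_of_nonneg_left h1 (by linarith : (0:ℝ) ≤ 1 - μ)
  have h2' := mul_le_mul_of_nonneg_left h2 hμ0
  have hx : c * x = c * (n : ℝ) + c * μ := by rw [hμ]; ring
  nlinarith [h1', h2', hsum, hx]
end

section
/- (Refinement monotonicity of the partition-based problem, Proposition 3(2) in its general form.) Let S be a finite set of scenarios with weights p : S → ℝ, p_s > 0, and data T^s (real m×n₁ matrices) and h^s ∈ ℝ^m for s ∈ S; let W be a real m×n₂ matrix, d ∈ ℝ^{n₂}, c ∈ ℝ^{n₁}, and X ⊆ ℝ^{n₁}. Let ι₁, ι₂ be finite sets and σ : S → ι₁, r : ι₁ → ι₂ with σ and r∘σ surjective; σ labels the finer partition N₁ and r∘σ the coarser partition N₂. For a surjective labeling τ : S → ι, define for each cell k ∈ ι the weight p^τ_k = Σ_{s : τ(s)=k} p_s, and the aggregated data T̄^τ_k = (Σ_{s : τ(s)=k} p_s • T^s)/p^τ_k, h̄^τ_k = (Σ_{s : τ(s)=k} p_s • h^s)/p^τ_k; a pair (x, y) with x ∈ X and y : ι →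 ℝ^{n₂} is τ-feasible if y_k ≥ 0 and T̄^τ_k x + W y_k ≥ h̄^τ_k for every k ∈ ι, and its objective value is c ⬝ x + Σ_{k∈ι} p^τ_k (d ⬝ y_k). Then: for every σ-feasible pair (x, y) there exists a (r∘σ)-feasible pair (x, y') with the same objective value; consequently, if L ∈ ℝ is a lower bound on the objective value over all (r∘σ)-feasible pairs, then L is also a lower bound on the objective value over all σ-feasible pairs (i.e., z^{N₁} ≥ z^{N₂}). -/
open Matrix Finset

/-- Total weight of the cell labeled `k` in the partition of `S` encoded by `τ`. -/
noncomputable def cellWeight {S ι : Type*} [Fintype S] [DecidableEq ι]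
    (p : S → ℝ) (τ : S → ι) (k : ι) : ℝ :=
  ∑ s ∈ Finset.univ.filter (fun s => τ s = k), p s

/-- Aggregated technology matrix of the cell labeled `k`. -/
noncomputable def aggT {S ι : Type*} [Fintype S] [DecidableEq ι] {m n₁ : ℕ}
    (p : S → ℝ) (T : S → Matrix (Fin m) (Fin n₁) ℝ) (τ : S → ι) (k : ι) :
    Matrix (Fin m) (Fin n₁) ℝ :=
  (cellWeight p τ k)⁻¹ • ∑ s ∈ Finset.univ.filter (fun s => τ s = k), p s • T s

/-- Aggregated right-hand side vector of the cell labeled `k`. -/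
noncomputable def aggh {S ι : Type*} [Fintype S] [DecidableEq ι] {m : ℕ}
    (p : S → ℝ) (h : S → Fin m → ℝ) (τ : S → ι) (k : ι) : Fin m → ℝ :=
  (cellWeight p τ k)⁻¹ • ∑ s ∈ Finset.univ.filter (fun s => τ s = k), p s • h s

/-- `(x, y)` is feasible for the partition-based problem given by the labeling `τ`. -/
def IsPartitionFeasible {S ι : Type*} [Fintype S] [DecidableEq ι] {m n₁ n₂ : ℕ}
    (p : S → ℝ) (T : S → Matrix (Fin m) (Fin n₁) ℝ) (h : S → Fin m → ℝ)
    (W : Matrix (Fin m) (Fin n₂) ℝ) (X : Set (Fin n₁ → ℝ)) (τ : S → ι)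
    (x : Fin n₁ → ℝ) (y : ι → Fin n₂ → ℝ) : Prop :=
  x ∈ X ∧ ∀ k : ι, 0 ≤ y k ∧ aggh p h τ k ≤ aggT p T τ k *ᵥ x + W *ᵥ y k

/-- Objective value of `(x, y)` in the partition-based problem given by `τ`. -/
noncomputable def partitionObj {S ι : Type*} [Fintype S] [Fintype ι] [DecidableEq ι]
    {n₁ n₂ : ℕ} (p : S → ℝ) (c : Fin n₁ → ℝ) (d : Fin n₂ → ℝ) (τ : S → ι)
    (x : Fin n₁ → ℝ) (y : ι → Fin n₂ → ℝ) : ℝ :=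
  c ⬝ᵥ x + ∑ k : ι, cellWeight p τ k * (d ⬝ᵥ y k)

lemma fiber_split {S ι₁ ι₂ M : Type*} [Fintype S] [Fintype ι₁] [DecidableEq ι₁]
    [DecidableEq ι₂] [AddCommMonoid M] (σ : S → ι₁) (r : ι₁ → ι₂) (f : S → M) (k₂ : ι₂) :
    ∑ s ∈ univ.filter (fun s => r (σ s) = k₂), f s
      = ∑ k₁ ∈ univ.filter (fun k₁ => r k₁ = k₂),
          ∑ s ∈ univ.filter (fun s => σ s = k₁), f s := by
  rw [← Finset.sum_fiberwise_of_maps_to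
      (g := σ) (t := univ.filter fun k₁ => r k₁ = k₂)
      (fun s hs => by
        simp only [mem_filter, mem_univ, true_and] at hs ⊢; exact hs) f]
  refine Finset.sum_congr rfl fun k₁ hk₁ => Finset.sum_congr ?_ fun _ _ => rfl
  simp only [mem_filter, mem_univ, true_and] at hk₁
  ext s
  simp only [mem_filter, mem_univ, true_and]
  exact ⟨fun h => h.2, fun h => ⟨by rw [h, hk₁], h⟩⟩

lemma cellWeight_pos {S ι : Type*} [Fintype S] [DecidableEq ι]
    {p : S → ℝ} (hp : ∀ s, 0 < p s) {τ : S → ι} (hτ : Function.Surjective τ) (k : ι) :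
    0 < cellWeight p τ k := by
  obtain ⟨s, hs⟩ := hτ k
  exact Finset.sum_pos' (fun s _ => (hp s).le)
    ⟨s, by simp only [mem_filter, mem_univ, true_and]; exact hs, hp s⟩

/-- Proposition 3(2), general form: refinement monotonicity of the
partition-based problem: every solution feasible for the finer partition `σ` can be
aggregated to a solution feasible for the coarser partition `r ∘ σ` with the same
objective value; hence `z^{N₁} ≥ z^{N₂}`. -/
theorem partition_refinement_monotone {S ι₁ ι₂ : Type*} [Fintype S] [Fintype ι₁]
    [Fintype ι₂] [DecidableEq ι₁] [DecidableEq ι₂] {m n₁ n₂ : ℕ}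
    (p : S → ℝ) (hp : ∀ s, 0 < p s)
    (T : S → Matrix (Fin m) (Fin n₁) ℝ) (h : S → Fin m → ℝ)
    (W : Matrix (Fin m) (Fin n₂) ℝ) (d : Fin n₂ → ℝ) (c : Fin n₁ → ℝ)
    (X : Set (Fin n₁ → ℝ)) (σ : S → ι₁) (r : ι₁ → ι₂)
    (hσ : Function.Surjective σ) (hrσ : Function.Surjective (r ∘ σ)) :
    (∀ (x : Fin n₁ → ℝ) (y : ι₁ → Fin n₂ → ℝ), IsPartitionFeasible p T h W X σ x y →
      ∃ y' : ι₂ → Fin n₂ → ℝ, IsPartitionFeasible p T h W X (r ∘ σ) x y' ∧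
        partitionObj p c d (r ∘ σ) x y' = partitionObj p c d σ x y) ∧
    (∀ L : ℝ,
      (∀ (x : Fin n₁ → ℝ) (y : ι₂ → Fin n₂ → ℝ), IsPartitionFeasible p T h W X (r ∘ σ) x y →
        L ≤ partitionObj p c d (r ∘ σ) x y) →
      ∀ (x : Fin n₁ → ℝ) (y : ι₁ → Fin n₂ → ℝ), IsPartitionFeasible p T h W X σ x y →
        L ≤ partitionObj p c d σ x y) := by
  have hwpos : ∀ k, 0 < cellWeight p σ k := cellWeight_pos hp hσ
  have hWpos : ∀ k, 0 < cellWeight p (r ∘ σ) k := cellWeight_pos hp hrσ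
  have part1 : ∀ (x : Fin n₁ → ℝ) (y : ι₁ → Fin n₂ → ℝ),
      IsPartitionFeasible p T h W X σ x y →
      ∃ y' : ι₂ → Fin n₂ → ℝ, IsPartitionFeasible p T h W X (r ∘ σ) x y' ∧
        partitionObj p c d (r ∘ σ) x y' = partitionObj p c d σ x y := by
    rintro x y ⟨hx, hy⟩
    set F : ι₂ → Finset ι₁ := fun k₂ => univ.filter (fun k₁ => r k₁ = k₂) with hF
    set v : ι₂ → Fin n₂ → ℝ := fun k₂ => ∑ k₁ ∈ F k₂, cellWeight p σ k₁ • y k₁ with hv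
    refine ⟨fun k₂ => (cellWeight p (r ∘ σ) k₂)⁻¹ • v k₂, ⟨hx, fun k₂ => ⟨?_, ?_⟩⟩, ?_⟩
    · exact smul_nonneg (inv_nonneg.mpr (hWpos k₂).le)
        (Finset.sum_nonneg fun k₁ _ => smul_nonneg (hwpos k₁).le (hy k₁).1)
    · -- feasibility
      have key : ∀ k₁, (∑ s ∈ univ.filter (fun s => σ s = k₁), p s • h s)
          ≤ (∑ s ∈ univ.filter (fun s => σ s = k₁), p s • T s) *ᵥ x
            + cellWeight p σ k₁ • (W *ᵥ y k₁) := by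
        intro k₁
        have h3 := smul_le_smul_of_nonneg_left (hy k₁).2 (hwpos k₁).le
        rwa [aggh, aggT, smul_smul, mul_inv_cancel₀ (hwpos k₁).ne', one_smul,
          smul_add, Matrix.smul_mulVec, smul_smul,
          mul_inv_cancel₀ (hwpos k₁).ne', one_smul] at h3
      have core : (∑ s ∈ univ.filter (fun s => r (σ s) = k₂), p s • h s)
          ≤ (∑ s ∈ univ.filter (fun s => r (σ s) = k₂), p s • T s) *ᵥ x + W *ᵥ v k₂ := by
        have hWv : W *ᵥ v k₂ = ∑ k₁ ∈ F k₂, cellWeight p σ k₁ • (W *ᵥ y k₁) := by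
          rw [hv, ← Matrix.mulVecLin_apply, map_sum]
          simp [Matrix.mulVecLin_apply, Matrix.mulVec_smul]
        have sum_mulVec : ∀ (t : Finset ι₁) (A : ι₁ → Matrix (Fin m) (Fin n₁) ℝ),
            (∑ k ∈ t, A k) *ᵥ x = ∑ k ∈ t, A k *ᵥ x := by
          intro t A
          ext i
          simp only [Matrix.mulVec, dotProduct, Finset.sum_apply,
            Matrix.sum_apply, Finset.sum_mul]
          exact Finset.sum_comm
        have hAx : (∑ s ∈ univ.filter (fun s => r (σ s) = k₂), p s • T s) *ᵥ x
            = ∑ k₁ ∈ F k₂, (∑ s ∈ univ.filter (fun s => σ s = k₁), p s • T s) *ᵥ x := by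
          rw [fiber_split σ r (fun s => p s • T s) k₂, sum_mulVec]
        rw [fiber_split σ r (fun s => p s • h s) k₂, hWv, hAx, ← Finset.sum_add_distrib]
        exact Finset.sum_le_sum fun k₁ _ => key k₁
      have := smul_le_smul_of_nonneg_left core (inv_nonneg.mpr (hWpos k₂).le)
      rw [smul_add] at this
      calc aggh p h (r ∘ σ) k₂
          ≤ (cellWeight p (r ∘ σ) k₂)⁻¹ •
              ((∑ s ∈ univ.filter (fun s => r (σ s) = k₂), p s • T s) *ᵥ x)
            + (cellWeight p (r ∘ σ) k₂)⁻¹ • (W *ᵥ v k₂) := by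
            simpa [aggh, Function.comp] using this
        _ = aggT p T (r ∘ σ) k₂ *ᵥ x + W *ᵥ ((cellWeight p (r ∘ σ) k₂)⁻¹ • v k₂) := by
            rw [aggT, Matrix.smul_mulVec, Matrix.mulVec_smul]
            simp [Function.comp]
    · -- objective equality
      simp only [partitionObj]
      congr 1
      rw [← Finset.sum_fiberwise_of_maps_to (g := r) (t := (univ : Finset ι₂))
        (fun k₁ _ => mem_univ (r k₁)) (fun k₁ => cellWeight p σ k₁ * (d ⬝ᵥ y k₁))]
      refine Finset.sum_congr rfl fun k₂ _ => ?_
      have hdv : d ⬝ᵥ ((cellWeight p (r ∘ σ) k₂)⁻¹ • v k₂)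
          = (cellWeight p (r ∘ σ) k₂)⁻¹ * (d ⬝ᵥ v k₂) := by
        rw [dotProduct_smul]; rfl
      have dot_sum : ∀ (t : Finset ι₁) (u : ι₁ → Fin n₂ → ℝ),
          d ⬝ᵥ (∑ k ∈ t, u k) = ∑ k ∈ t, d ⬝ᵥ u k := by
        intro t u
        simp only [dotProduct, Finset.sum_apply, Finset.mul_sum]
        exact Finset.sum_comm
      have hdv2 : d ⬝ᵥ v k₂ = ∑ k₁ ∈ F k₂, cellWeight p σ k₁ * (d ⬝ᵥ y k₁) := by
        rw [show v k₂ = ∑ k₁ ∈ F k₂, cellWeight p σ k₁ • y k₁ from rfl, dot_sum]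
        exact Finset.sum_congr rfl fun k₁ _ => by rw [dotProduct_smul]; rfl
      rw [hdv, hdv2, ← mul_assoc, mul_inv_cancel₀ (hWpos k₂).ne', one_mul]
  refine ⟨part1, fun L hL x y hxy => ?_⟩
  obtain ⟨y', hy', heq⟩ := part1 x y hxy
  rw [← heq]
  exact hL x y' hy'
end

section
/- (Aggregation inequality for LP value functions, underlying Proposition 4.) Let W be a real m×n₂ matrix, d ∈ ℝ^{n₂}, x ∈ ℝ^{n₁}, p₁, p₂ > 0, and for j = 1, 2 let T_j be real m×n₁ matrices and h_j ∈ ℝ^m. Define F_j = {y ∈ ℝ^{n₂} : y ≥ 0, T_j x + W y ≥ h_j} and the aggregated feasible set F_P = {y ∈ ℝ^{n₂} : y ≥ 0, T̄ x + W y ≥ h̄} with T̄ = (p₁ • T₁ + p₂ • T₂)/(p₁+p₂) and h̄ = (p₁ • h₁ + p₂ • h₂)/(p₁+p₂). Assume F₁ and F₂ are nonempty and that the sets {d ⬝ y : y ∈ F₁}, {d ⬝ y : y ∈ F₂}, and {d ⬝ y : y ∈ F_P} are bounded below. Then sInf {d ⬝ y : y ∈ F_P} ≤ (p₁ · sInf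 {d ⬝ y : y ∈ F₁} + p₂ · sInf {d ⬝ y : y ∈ F₂})/(p₁+p₂). -/
open Matrix

/-- aggregation inequality for LP value functions (underlying Proposition 4). -/
theorem aggregated_value_le_average {n₁ n₂ m : ℕ} (W : Matrix (Fin m) (Fin n₂) ℝ)
    (d : Fin n₂ → ℝ) (x : Fin n₁ → ℝ) (p₁ p₂ : ℝ) (hp₁ : 0 < p₁) (hp₂ : 0 < p₂)
    (T₁ T₂ : Matrix (Fin m) (Fin n₁) ℝ) (h₁ h₂ : Fin m → ℝ)
    (F₁ F₂ FP : Set (Fin n₂ → ℝ))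
    (hF₁ : F₁ = {y | 0 ≤ y ∧ h₁ ≤ T₁ *ᵥ x + W *ᵥ y})
    (hF₂ : F₂ = {y | 0 ≤ y ∧ h₂ ≤ T₂ *ᵥ x + W *ᵥ y})
    (hFP : FP = {y | 0 ≤ y ∧ (p₁ + p₂)⁻¹ • (p₁ • h₁ + p₂ • h₂) ≤
      ((p₁ + p₂)⁻¹ • (p₁ • T₁ + p₂ • T₂)) *ᵥ x + W *ᵥ y})
    (hne₁ : F₁.Nonempty) (hne₂ : F₂.Nonempty)
    (hb₁ : BddBelow ((fun y => d ⬝ᵥ y) '' F₁))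
    (hb₂ : BddBelow ((fun y => d ⬝ᵥ y) '' F₂))
    (hbP : BddBelow ((fun y => d ⬝ᵥ y) '' FP)) :
    sInf ((fun y => d ⬝ᵥ y) '' FP) ≤
      (p₁ * sInf ((fun y => d ⬝ᵥ y) '' F₁) + p₂ * sInf ((fun y => d ⬝ᵥ y) '' F₂)) /
        (p₁ + p₂) := by
  have hs : (0:ℝ) < p₁ + p₂ := by linarith
  set C := sInf ((fun y => d ⬝ᵥ y) '' FP) with hC
  set A := sInf ((fun y => d ⬝ᵥ y) '' F₁) with hA
  set B := sInf ((fun y => d ⬝ᵥ y) '' F₂) with hB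
  have key : ∀ y₁ ∈ F₁, ∀ y₂ ∈ F₂,
      C ≤ (p₁ * (d ⬝ᵥ y₁) + p₂ * (d ⬝ᵥ y₂)) / (p₁ + p₂) := by
    intro y₁ hy₁ y₂ hy₂
    rw [hF₁] at hy₁; rw [hF₂] at hy₂
    obtain ⟨hy₁0, hy₁c⟩ := hy₁
    obtain ⟨hy₂0, hy₂c⟩ := hy₂
    set z : Fin n₂ → ℝ := (p₁ + p₂)⁻¹ • (p₁ • y₁ + p₂ • y₂) with hz
    have hzmem : z ∈ FP := by
      rw [hFP]
      constructor
      · intro i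
        have h1 := hy₁0 i
        have h2 := hy₂0 i
        simp only [hz, Pi.smul_apply, Pi.add_apply, smul_eq_mul, Pi.zero_apply] at *
        positivity
      · have expand : ((p₁ + p₂)⁻¹ • (p₁ • T₁ + p₂ • T₂)) *ᵥ x + W *ᵥ z
            = (p₁ + p₂)⁻¹ • (p₁ • (T₁ *ᵥ x + W *ᵥ y₁) + p₂ • (T₂ *ᵥ x + W *ᵥ y₂)) := by
          rw [hz]
          simp only [Matrix.add_mulVec, Matrix.smul_mulVec, Matrix.mulVec_smul, Matrix.mulVec_add,
            smul_add]
          module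
        rw [expand]
        refine smul_le_smul_of_nonneg_left ?_ (by positivity)
        exact add_le_add (smul_le_smul_of_nonneg_left hy₁c hp₁.le)
          (smul_le_smul_of_nonneg_left hy₂c hp₂.le)
    have hdz : d ⬝ᵥ z = (p₁ * (d ⬝ᵥ y₁) + p₂ * (d ⬝ᵥ y₂)) / (p₁ + p₂) := by
      rw [hz, dotProduct_smul, dotProduct_add, dotProduct_smul, dotProduct_smul]
      simp [smul_eq_mul, div_eq_inv_mul]
    calc C ≤ d ⬝ᵥ z := csInf_le hbP ⟨z, hzmem, rfl⟩
      _ = _ := hdz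
  have step2 : ∀ y₂ ∈ F₂, C ≤ (p₁ * A + p₂ * (d ⬝ᵥ y₂)) / (p₁ + p₂) := by
    intro y₂ hy₂
    have hlb : ((p₁ + p₂) * C - p₂ * (d ⬝ᵥ y₂)) / p₁ ≤ A := by
      apply le_csInf (hne₁.image _)
      rintro _ ⟨y₁, hy₁, rfl⟩
      have := key y₁ hy₁ y₂ hy₂
      rw [le_div_iff₀ hs] at this
      rw [div_le_iff₀ hp₁]
      nlinarith
    rw [le_div_iff₀ hs]
    rw [div_le_iff₀ hp₁] at hlb
    nlinarith
  rw [le_div_iff₀ hs]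
  have hlb : ((p₁ + p₂) * C - p₁ * A) / p₂ ≤ B := by
    apply le_csInf (hne₂.image _)
    rintro _ ⟨y₂, hy₂, rfl⟩
    have := step2 y₂ hy₂
    rw [le_div_iff₀ hs] at this
    rw [div_le_iff₀ hp₂]
    nlinarith
  rw [div_le_iff₀ hp₂] at hlb
  nlinarith
end

section
/- (Proposition 4: the aggregated recourse value under a common-representation condition.) Let X ⊆ ℝ^{n₁}, p₁, p₂ > 0, and let Q₁, Q₂, Q_P : ℝ^{n₁} → ℝ satisfy Q_P(x) ≤ (p₁ Q₁(x) + p₂ Q₂(x))/(p₁+p₂) for every x ∈ X. Define E_j = {(x, θ) ∈ ℝ^{n₁} × ℝ : x ∈ X, θ ≥ Q_j(x)} for j ∈ {1, 2, P}. Let x̂ ∈ ℝ^{n₁}, f₁, f₂ ∈ ℝ, and suppose there are a finite set I, weights λ : I → ℝ with λ_i > 0 and Σ_{i∈I} λ_i = 1, points x_i ∈ X, and reals θ_i¹, θ_i² with (x_i, θ_i¹) ∈ E₁ and (x_i, θ_i²) ∈ E₂ for each i ∈ I, such that (x̂, f₁) = Σ_{i∈I} λ_i (x_i, θ_i¹)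 and (x̂, f₂) = Σ_{i∈I} λ_i (x_i, θ_i²) (the same points x_i and the same weights λ_i in both representations). Then (x̂, (p₁ f₁ + p₂ f₂)/(p₁+p₂)) belongs to the convex hull of E_P; in particular, every lower bound f on {θ : (x̂, θ) ∈ convexHull E_P} satisfies f ≤ (p₁ f₁ + p₂ f₂)/(p₁+p₂). -/
open Finset

/-- Proposition 4: under a common-representation condition, the average
of the two scenario recourse values at `xhat` lies in the convex hull of the aggregated
epigraph, so the aggregated recourse value at `xhat` is at most the weighted average. -/
theorem aggregated_recourse_common_representation {n₁ : ℕ} {ι : Type*}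
    (X : Set (Fin n₁ → ℝ)) (p₁ p₂ : ℝ) (hp₁ : 0 < p₁) (hp₂ : 0 < p₂)
    (Q₁ Q₂ QP : (Fin n₁ → ℝ) → ℝ)
    (hQ : ∀ x ∈ X, QP x ≤ (p₁ * Q₁ x + p₂ * Q₂ x) / (p₁ + p₂))
    (E₁ E₂ EP : Set ((Fin n₁ → ℝ) × ℝ))
    (hE₁ : E₁ = {q | q.1 ∈ X ∧ Q₁ q.1 ≤ q.2})
    (hE₂ : E₂ = {q | q.1 ∈ X ∧ Q₂ q.1 ≤ q.2})
    (hEP : EP = {q | q.1 ∈ X ∧ QP q.1 ≤ q.2})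
    (xhat : Fin n₁ → ℝ) (f₁ f₂ : ℝ) (I : Finset ι) (lam : ι → ℝ)
    (hlam : ∀ i ∈ I, 0 < lam i) (hsum : ∑ i ∈ I, lam i = 1)
    (xi : ι → Fin n₁ → ℝ) (hxi : ∀ i ∈ I, xi i ∈ X) (θ₁ θ₂ : ι → ℝ)
    (hmem₁ : ∀ i ∈ I, (xi i, θ₁ i) ∈ E₁) (hmem₂ : ∀ i ∈ I, (xi i, θ₂ i) ∈ E₂)
    (hrep₁ : (xhat, f₁) = ∑ i ∈ I, lam i • (xi i, θ₁ i))
    (hrep₂ : (xhat, f₂) = ∑ i ∈ I, lam i • (xi i, θ₂ i)) :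
    (xhat, (p₁ * f₁ + p₂ * f₂) / (p₁ + p₂)) ∈ convexHull ℝ EP ∧
    ∀ f : ℝ, (∀ θ : ℝ, (xhat, θ) ∈ convexHull ℝ EP → f ≤ θ) →
      f ≤ (p₁ * f₁ + p₂ * f₂) / (p₁ + p₂) := by
  have hpp : 0 < p₁ + p₂ := by linarith
  -- extract components
  have hx1 : xhat = ∑ i ∈ I, lam i • xi i := by
    have := congrArg Prod.fst hrep₁
    simpa [Prod.fst_sum] using this
  have hf₁ : f₁ = ∑ i ∈ I, lam i * θ₁ i := by
    have := congrArg Prod.snd hrep₁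
    simpa [Prod.snd_sum, smul_eq_mul] using this
  have hf₂ : f₂ = ∑ i ∈ I, lam i * θ₂ i := by
    have := congrArg Prod.snd hrep₂
    simpa [Prod.snd_sum, smul_eq_mul] using this
  set θ : ι → ℝ := fun i => (p₁ * θ₁ i + p₂ * θ₂ i) / (p₁ + p₂) with hθ
  have hmemP : ∀ i ∈ I, (xi i, θ i) ∈ EP := by
    intro i hi
    have h1 : Q₁ (xi i) ≤ θ₁ i := (hE₁ ▸ hmem₁ i hi).2
    have h2 : Q₂ (xi i) ≤ θ₂ i := (hE₂ ▸ hmem₂ i hi).2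
    refine hEP ▸ ⟨hxi i hi, ?_⟩
    calc QP (xi i) ≤ (p₁ * Q₁ (xi i) + p₂ * Q₂ (xi i)) / (p₁ + p₂) := hQ _ (hxi i hi)
      _ ≤ θ i := by
          simp only [hθ]
          gcongr
  have hkey : (xhat, (p₁ * f₁ + p₂ * f₂) / (p₁ + p₂)) = ∑ i ∈ I, lam i • (xi i, θ i) := by
    have hsnd : ∑ i ∈ I, lam i * θ i = (p₁ * f₁ + p₂ * f₂) / (p₁ + p₂) := by
      rw [hf₁, hf₂, Finset.mul_sum, Finset.mul_sum, ← Finset.sum_add_distrib,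
        Finset.sum_div]
      refine Finset.sum_congr rfl fun i _ => ?_
      simp only [hθ]
      field_simp
    refine Prod.ext ?_ ?_
    · simpa [Prod.fst_sum] using hx1
    · simp [Prod.snd_sum, smul_eq_mul, hsnd]
  have hmem : (xhat, (p₁ * f₁ + p₂ * f₂) / (p₁ + p₂)) ∈ convexHull ℝ EP := by
    rw [hkey]
    exact (convex_convexHull ℝ EP).sum_mem (fun i hi => (hlam i hi).le) hsum
      (fun i hi => subset_convexHull ℝ EP (hmemP i hi))
  exact ⟨hmem, fun f hf => hf _ hmem⟩
end

section
/- (Theorem 1 via the two-scenario example: a partition-based Lagrangian relaxation can strictly dominate the Lagrangian dual relaxation.) Define E¹ = {(x, y, z) ∈ ℝ³ : x ∈ {0,1}, y ∈ {0,1}, z ≥ max(x − y, y − x)}, E² = {(x, y, z) ∈ ℝ³ : x ∈ {0,1}, y ∈ {0,1}, z ≥ max(1 − x − y, x + y − 1)}, and the aggregated set E^P = {(x, y, z) ∈ ℝ³ : x ∈ {0,1}, y ∈ {0,1}, z ≥ max(1/2 − y, y − 1/2)}. Then: (i) the point (1/2, 1/2, 0) belongs to the convex hull of E¹; (ii) (1/2,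 1/2, 0) belongs to the convex hull of E²; (iii) every point (x, y, z) in the convex hull of E^P satisfies z ≥ 1/2; in particular (1/2, 1/2, 0) does not belong to the convex hull of E^P. Hence the partition-based Lagrangian cuts cut off a point of the intersection of the convex hulls of the scenario sets, and are not dominated by the Lagrangian cuts of the original problem. -/
/-- Theorem 1 via the two-scenario example: the point `(1/2, 1/2, 0)`
lies in the convex hulls of both scenario epigraph sets, but every point of the convex
hull of the aggregated epigraph set has third coordinate at least `1/2`; hence the
partition-based Lagrangian cuts cut off a point of the Lagrangian dual relaxation. -/
theorem partition_lagrangian_cut_not_dominated (E₁ E₂ EP : Set (ℝ × ℝ × ℝ))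
    (hE₁ : E₁ = {q : ℝ × ℝ × ℝ | (q.1 = 0 ∨ q.1 = 1) ∧ (q.2.1 = 0 ∨ q.2.1 = 1) ∧
      max (q.1 - q.2.1) (q.2.1 - q.1) ≤ q.2.2})
    (hE₂ : E₂ = {q : ℝ × ℝ × ℝ | (q.1 = 0 ∨ q.1 = 1) ∧ (q.2.1 = 0 ∨ q.2.1 = 1) ∧
      max (1 - q.1 - q.2.1) (q.1 + q.2.1 - 1) ≤ q.2.2})
    (hEP : EP = {q : ℝ × ℝ × ℝ | (q.1 = 0 ∨ q.1 = 1) ∧ (q.2.1 = 0 ∨ q.2.1 = 1) ∧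
      max (1 / 2 - q.2.1) (q.2.1 - 1 / 2) ≤ q.2.2}) :
    ((1 / 2 : ℝ), (1 / 2 : ℝ), (0 : ℝ)) ∈ convexHull ℝ E₁ ∧
    ((1 / 2 : ℝ), (1 / 2 : ℝ), (0 : ℝ)) ∈ convexHull ℝ E₂ ∧
    (∀ q ∈ convexHull ℝ EP, (1 / 2 : ℝ) ≤ q.2.2) ∧
    ((1 / 2 : ℝ), (1 / 2 : ℝ), (0 : ℝ)) ∉ convexHull ℝ EP := by
  have h1 : ((1 / 2 : ℝ), (1 / 2 : ℝ), (0 : ℝ)) ∈ convexHull ℝ E₁ := by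
    have ha : ((0:ℝ),(0:ℝ),(0:ℝ)) ∈ convexHull ℝ E₁ :=
      subset_convexHull ℝ E₁ (by simp [hE₁])
    have hb : ((1:ℝ),(1:ℝ),(0:ℝ)) ∈ convexHull ℝ E₁ :=
      subset_convexHull ℝ E₁ (by simp [hE₁])
    have := (convex_convexHull ℝ E₁) ha hb (by norm_num : (0:ℝ) ≤ 1/2)
      (by norm_num : (0:ℝ) ≤ 1/2) (by norm_num)
    convert this using 1
    simp [Prod.ext_iff, Prod.smul_def]
  have h2 : ((1 / 2 : ℝ), (1 / 2 : ℝ), (0 : ℝ)) ∈ convexHull ℝ E₂ := by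
    have ha : ((0:ℝ),(1:ℝ),(0:ℝ)) ∈ convexHull ℝ E₂ :=
      subset_convexHull ℝ E₂ (by simp [hE₂])
    have hb : ((1:ℝ),(0:ℝ),(0:ℝ)) ∈ convexHull ℝ E₂ :=
      subset_convexHull ℝ E₂ (by simp [hE₂])
    have := (convex_convexHull ℝ E₂) ha hb (by norm_num : (0:ℝ) ≤ 1/2)
      (by norm_num : (0:ℝ) ≤ 1/2) (by norm_num)
    convert this using 1
    simp [Prod.ext_iff, Prod.smul_def]
  have h3 : ∀ q ∈ convexHull ℝ EP, (1 / 2 : ℝ) ≤ q.2.2 := by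
    have hC : Convex ℝ {q : ℝ × ℝ × ℝ | (1/2:ℝ) ≤ q.2.2} := by
      intro p hp r hr a b ha hb hab
      simp only [Set.mem_setOf_eq, Prod.smul_def, Prod.mk_add_mk, smul_eq_mul] at *
      nlinarith [hp, hr]
    have hsub : EP ⊆ {q : ℝ × ℝ × ℝ | (1/2:ℝ) ≤ q.2.2} := by
      intro q hq
      rw [hEP] at hq
      obtain ⟨_, hy, hz⟩ := hq
      rcases hy with hy | hy <;>
        simp only [Set.mem_setOf_eq] <;>
        [ (have := le_trans (le_max_left _ _) hz; rw [hy] at this; linarith);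
          (have := le_trans (le_max_right _ _) hz; rw [hy] at this; linarith) ]
    exact fun q hq => (convexHull_min hsub hC) hq
  have h4 : ((1 / 2 : ℝ), (1 / 2 : ℝ), (0 : ℝ)) ∉ convexHull ℝ EP := by
    intro h
    have := h3 _ h
    norm_num at this
  exact ⟨h1, h2, h3, h4⟩
end

section
/- (Positive Lagrangian duality gap in the two-scenario example of Theorem 1.) Define E¹ = {(x, y, z) ∈ ℝ³ : x ∈ {0,1}, y ∈ {0,1}, z ≥ max(x − y, y − x)} and E² = {(x, y, z) ∈ ℝ³ : x ∈ {0,1}, y ∈ {0,1}, z ≥ max(1 − x − y, x + y − 1)}. Then: (i) for every (x, y) ∈ {0,1}², one has (max(x − y, y − x) + max(1 − x − y, x + y − 1))/2 = 1/2, so the optimal value of the integer problem min_{(x,y)∈{0,1}²} (1/2)(max(x−y, y−x) + max(1−x−y, x+y−1)) equals 1/2; (ii) there exist x, y ∈ ℝ and θ₁, θ₂ ∈ ℝ with (x, y, θ₁) in the convex hull of E¹, (x, y, θ₂) in the convex hull of E², and (θ₁ + θ₂)/2 = 0 < 1/2 (namely (x, y, θ₁) = (1/2, 1/2, 0) and (x,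 y, θ₂) = (1/2, 1/2, 0)). Hence the Lagrangian dual relaxation value is strictly below the integer optimal value: the original problem has a positive Lagrangian duality gap. -/
/-- positive Lagrangian duality gap in the two-scenario example of
Theorem 1: the integer optimal value is `1/2`, while the Lagrangian dual relaxation
attains value `0` at the point `(1/2, 1/2)` shared by both scenario convex hulls. -/
theorem positive_lagrangian_gap_example (E₁ E₂ : Set (ℝ × ℝ × ℝ))
    (hE₁ : E₁ = {q : ℝ × ℝ × ℝ | (q.1 = 0 ∨ q.1 = 1) ∧ (q.2.1 = 0 ∨ q.2.1 = 1) ∧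
      max (q.1 - q.2.1) (q.2.1 - q.1) ≤ q.2.2})
    (hE₂ : E₂ = {q : ℝ × ℝ × ℝ | (q.1 = 0 ∨ q.1 = 1) ∧ (q.2.1 = 0 ∨ q.2.1 = 1) ∧
      max (1 - q.1 - q.2.1) (q.1 + q.2.1 - 1) ≤ q.2.2}) :
    (∀ x y : ℝ, (x = 0 ∨ x = 1) → (y = 0 ∨ y = 1) →
      (max (x - y) (y - x) + max (1 - x - y) (x + y - 1)) / 2 = 1 / 2) ∧
    IsLeast {v : ℝ | ∃ x y : ℝ, (x = 0 ∨ x = 1) ∧ (y = 0 ∨ y = 1) ∧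
      v = (max (x - y) (y - x) + max (1 - x - y) (x + y - 1)) / 2} (1 / 2) ∧
    (∃ x y θ₁ θ₂ : ℝ, (x, y, θ₁) ∈ convexHull ℝ E₁ ∧ (x, y, θ₂) ∈ convexHull ℝ E₂ ∧
      (θ₁ + θ₂) / 2 = 0 ∧ (θ₁ + θ₂) / 2 < 1 / 2 ∧
      x = 1 / 2 ∧ y = 1 / 2 ∧ θ₁ = 0 ∧ θ₂ = 0) := by
  have hval : ∀ x y : ℝ, (x = 0 ∨ x = 1) → (y = 0 ∨ y = 1) →
      (max (x - y) (y - x) + max (1 - x - y) (x + y - 1)) / 2 = 1 / 2 := by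
    rintro x y (rfl | rfl) (rfl | rfl) <;> norm_num
  refine ⟨hval, ⟨⟨0, 0, Or.inl rfl, Or.inl rfl, by norm_num⟩, ?_⟩, ?_⟩
  · rintro v ⟨x, y, hx, hy, rfl⟩
    rw [hval x y hx hy]
  · refine ⟨1/2, 1/2, 0, 0, ?_, ?_, by norm_num, by norm_num, rfl, rfl, rfl, rfl⟩
    · have ha : ((0 : ℝ), (0 : ℝ), (0 : ℝ)) ∈ E₁ := by rw [hE₁]; norm_num
      have hb : ((1 : ℝ), (1 : ℝ), (0 : ℝ)) ∈ E₁ := by rw [hE₁]; norm_num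
      have := (convex_convexHull ℝ E₁) (subset_convexHull ℝ E₁ ha)
        (subset_convexHull ℝ E₁ hb) (by norm_num : (0:ℝ) ≤ 1/2)
        (by norm_num : (0:ℝ) ≤ 1/2) (by norm_num)
      convert this using 1
      simp [Prod.ext_iff]
    · have ha : ((0 : ℝ), (1 : ℝ), (0 : ℝ)) ∈ E₂ := by rw [hE₂]; norm_num
      have hb : ((1 : ℝ), (0 : ℝ), (0 : ℝ)) ∈ E₂ := by rw [hE₂]; norm_num
      have := (convex_convexHull ℝ E₂) (subset_convexHull ℝ E₂ ha)
        (subset_convexHull ℝ E₂ hb) (by norm_num : (0:ℝ) ≤ 1/2)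
        (by norm_num : (0:ℝ) ≤ 1/2) (by norm_num)
      convert this using 1
      simp [Prod.ext_iff]
end
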